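/- Let k be a field of characteristic zero that is algebraically closed, and let f_1 ∈ k[x_1],...,f_n ∈ k[x_n] be nonconstant univariate polynomials with root sets A_i and multiplicities ν_i, and set I = (f_1,...,f_n) ⊆ k[x_1,...,x_n]. Then the maximal degree of a minimal polynomial of an element of k[x_1,...,x_n]/I over k equals Σ_{a ∈ A_1×...×A_n} (ν_1(a_1) + ... + ν_n(a_n) - n + 1). -/

import Mathlib

/-!
Localize at each point `a` of the grid `A₁ × ⋯ × Aₙ`. Modulo the primary ideal
`qₐ = ((xᵢ - aᵢ) ^ νᵢ(aᵢ))ᵢ`, every `p` with `p(a) = 0` satisfies `p ^ mₐ = 0`, where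
`mₐ = Σᵢ (νᵢ(aᵢ) - 1) + 1`, by pigeonhole on the exponents in the multinomial expansion. Since
`∏ₐ qₐ ⊆ I` (every product of one generator from each `qₐ` contains one of the `fᵢ` as a
factor), `∏ₐ (T - p(a)) ^ mₐ` annihilates `p` in `k[x]/I`, which bounds every minimal polynomial.

Conversely, take a linear form `ℓ = Σ λᵢ xᵢ` with all `λᵢ ≠ 0` that separates the grid points.
In characteristic zero the monomial `Π (xᵢ - aᵢ) ^ (νᵢ(aᵢ) - 1)` occurs in `(ℓ - ℓ(a)) ^ (mₐ - 1)`
with a nonzero multinomial coefficient, so this power is not in `qₐ`. Hence `ℓ(a)` is a root of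
the minimal polynomial of `ℓ` of multiplicity at least `mₐ`, and these roots are distinct.
-/

open MvPolynomial Finset

theorem Ideal.pow_mem_span_pow_of_mem_span {R ι : Type*} [CommSemiring R] [Fintype ι]
    {y : ι → R} (e : ι → ℕ) {z : R} (hz : z ∈ Ideal.span (Set.range y)) :
    z ^ (∑ i, (e i - 1) + 1) ∈ Ideal.span (Set.range fun i => y i ^ e i) := by
  classical
  obtain ⟨c, rfl⟩ := Ideal.mem_span_range_iff_exists_fun.mp hz
  rw [sum_pow_eq_sum_piAntidiag]
  refine Ideal.sum_mem _ fun d hd => Ideal.mul_mem_left _ _ ?_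
  have hsum : ∑ i, d i = ∑ i, (e i - 1) + 1 := (mem_piAntidiag.mp hd).1
  obtain ⟨i, hi⟩ : ∃ i, e i ≤ d i := by
    by_contra! h
    have : ∑ i, d i ≤ ∑ i, (e i - 1) := sum_le_sum fun i _ => by have := h i; omega
    omega
  refine Ideal.prod_mem _ (mem_univ i) ?_
  rw [mul_pow]
  exact Ideal.mul_mem_left _ _ (Ideal.pow_mem_of_pow_mem _ (Ideal.subset_span ⟨i, rfl⟩) hi)

theorem Polynomial.pow_rootMultiplicity_eq_zero {K B : Type*} [Field K] [CommRing B] [Algebra K B]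
    {p : Polynomial K} (hp : p ≠ 0) {y : B} (hy : Polynomial.aeval y p = 0) {c : K}
    (hnil : IsNilpotent (y - algebraMap K B c)) :
    (y - algebraMap K B c) ^ p.rootMultiplicity c = 0 := by
  obtain ⟨u, hpu, hu⟩ := p.exists_eq_pow_rootMultiplicity_mul_and_not_dvd hp c
  have hunit : IsUnit (Polynomial.aeval y u) := by
    refine Polynomial.isUnit_aeval_of_isUnit_aeval_of_isNilpotent_sub ?_ hnil
    rw [Polynomial.aeval_algebraMap_apply, Polynomial.aeval_def, Algebra.algebraMap_self,
      Polynomial.eval₂_id]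
    exact (Ne.isUnit fun h => hu (Polynomial.dvd_iff_isRoot.mpr h)).map _
  rw [hpu, map_mul, map_pow, map_sub, Polynomial.aeval_X, Polynomial.aeval_C] at hy
  exact (hunit.mul_left_eq_zero).mp hy

theorem Polynomial.sum_rootMultiplicity_le_natDegree {R : Type*} [CommRing R] [IsDomain R]
    (p : Polynomial R) (s : Finset R) : ∑ c ∈ s, p.rootMultiplicity c ≤ p.natDegree := by
  classical
  calc ∑ c ∈ s, p.rootMultiplicity c = ∑ c ∈ s, p.roots.count c := by simp_rw [count_roots]
    _ ≤ ∑ c ∈ p.roots.toFinset, p.roots.count c :=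
      sum_le_sum_of_ne_zero fun c _ hc => Multiset.mem_toFinset.mpr (Multiset.count_ne_zero.mp hc)
    _ = Multiset.card p.roots := Multiset.toFinset_sum_count_eq _
    _ ≤ p.natDegree := p.card_roots'

theorem Finset.exists_prod_dvd_prod_piFinset {ι α M : Type*} [Fintype ι] [DecidableEq ι]
    [CommMonoid M] (A : ι → Finset α) (h : ι → α → M) (g : (ι → α) → M)
    (hg : ∀ a ∈ Fintype.piFinset A, ∃ i, g a = h i (a i)) :
    ∃ i, ∏ c ∈ A i, h i c ∣ ∏ a ∈ Fintype.piFinset A, g a := by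
  classical
  -- otherwise pick in each `A i` a value `c` realised by no `a` with `g a = h i (a i)`;
  -- the point made of these values contradicts `hg`
  obtain ⟨i, hi⟩ : ∃ i, ∀ c ∈ A i, ∃ a ∈ Fintype.piFinset A, g a = h i (a i) ∧ a i = c := by
    by_contra! H
    choose b hb hmiss using H
    have hbA : b ∈ Fintype.piFinset A := Fintype.mem_piFinset.mpr hb
    obtain ⟨i, hgi⟩ := hg b hbA
    exact hmiss i b hbA hgi rfl
  set S := (Fintype.piFinset A).filter fun a => g a = h i (a i)
  refine ⟨i, dvd_trans ?_ (prod_dvd_prod_of_subset S _ g (filter_subset _ _))⟩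
  rw [prod_congr rfl fun a ha => (mem_filter.mp ha).2]
  refine dvd_trans (prod_dvd_prod_of_dvd _ _ fun c hc => dvd_pow_self _ ?_)
    (dvd_trans (prod_dvd_prod_of_subset _ _ _ fun c hc => ?_)
      (prod_comp (s := S) (h i) (· i)).symm.dvd)
  all_goals obtain ⟨a, ha, hga, rfl⟩ := hi c hc
  · exact card_ne_zero.mpr ⟨a, mem_filter.mpr ⟨mem_filter.mpr ⟨ha, hga⟩, rfl⟩⟩
  · exact mem_image_of_mem _ (mem_filter.mpr ⟨ha, hga⟩)

theorem MvPolynomial.exists_forall_ne_zero_injOn_linear {k σ : Type*} [CommRing k] [IsDomain k]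
    [Infinite k] [Fintype σ] (S : Finset (σ → k)) :
    ∃ l : σ → k, (∀ i, l i ≠ 0) ∧ Set.InjOn (fun a : σ → k => ∑ i, l i * a i) S := by
  set F : MvPolynomial σ k :=
    (∏ i, X i) * ∏ z ∈ S.offDiag, ∑ i, (z.1 i - z.2 i) • X i
  have hF : F ≠ 0 := by
    refine mul_ne_zero (prod_ne_zero_iff.mpr fun i _ => X_ne_zero i)
      (prod_ne_zero_iff.mpr fun z hz h0 => (mem_offDiag.mp hz).2.2 (_root_.funext fun i => ?_))
    exact sub_eq_zero.mp
      (Fintype.linearIndependent_iff.mp (linearIndependent_X (R := k) (σ := σ)) _ h0 i)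
  obtain ⟨l, hl⟩ : ∃ l, eval l F ≠ 0 := by
    by_contra! h
    exact hF (MvPolynomial.funext fun x => by simp [h x])
  simp only [F, map_mul, map_prod, map_sum, smul_eval, eval_X, mul_ne_zero_iff,
    prod_ne_zero_iff] at hl
  refine ⟨l, fun i => hl.1 i (mem_univ i), fun a ha a' ha' hsum => ?_⟩
  by_contra hne
  refine hl.2 (a, a') (mem_offDiag.mpr ⟨ha, ha', hne⟩) ?_
  simp only [sub_mul, sum_sub_distrib]
  simpa [mul_comm, sub_eq_zero] using hsum

theorem Ideal.Quotient.aeval_mk_eq_zero_iff {R A : Type*} [CommRing R] [CommRing A] [Algebra R A]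
    (I : Ideal A) (x : A) (q : Polynomial R) :
    Polynomial.aeval (Ideal.Quotient.mk I x) q = 0 ↔ Polynomial.aeval x q ∈ I := by
  rw [← Ideal.Quotient.mkₐ_eq_mk R, Polynomial.aeval_algHom_apply, Ideal.Quotient.mkₐ_eq_mk,
    Ideal.Quotient.eq_zero_iff_mem]

namespace MvPolynomial

variable {k σ : Type*} [Field k]

theorem sub_C_eval_mem_span_X_sub_C (b : σ → k) (p : MvPolynomial σ k) :
    p - C (eval b p) ∈ Ideal.span (Set.range fun i => X i - C (b i)) := by
  set J := Ideal.span (Set.range fun i => X i - C (b i))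
  rw [← Ideal.Quotient.eq]
  have hX : ∀ i, Ideal.Quotient.mk J (X i) = Ideal.Quotient.mk J (C (b i)) :=
    fun i => Ideal.Quotient.eq.mpr (Ideal.subset_span ⟨i, rfl⟩)
  have h : Ideal.Quotient.mk J = (Ideal.Quotient.mk J).comp (C.comp (eval b)) :=
    ringHom_ext (fun a => by simp) fun i => by simp [hX]
  exact RingHom.congr_fun h p

noncomputable def pointIdeal (b : σ → k) (e : σ → ℕ) : Ideal (MvPolynomial σ k) :=
  Ideal.span (Set.range fun i => (X i - C (b i)) ^ e i)

variable [Fintype σ]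

theorem sub_C_eval_pow_mem_pointIdeal (b : σ → k) (e : σ → ℕ) (p : MvPolynomial σ k) :
    (p - C (eval b p)) ^ (∑ i, (e i - 1) + 1) ∈ pointIdeal b e :=
  Ideal.pow_mem_span_pow_of_mem_span e (sub_C_eval_mem_span_X_sub_C b p)

theorem linear_pow_notMem_span_X_pow [CharZero k] {e : σ → ℕ} (he : ∀ i, e i ≠ 0)
    {l : σ → k} (hl : ∀ i, l i ≠ 0) :
    (∑ i, l i • X i) ^ (∑ i, (e i - 1)) ∉
      Ideal.span (Set.range fun i => (X i : MvPolynomial σ k) ^ e i) := by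
  set d : σ →₀ ℕ := Finsupp.equivFunOnFinite.symm fun i => e i - 1
  have hgens : (fun i => (X i : MvPolynomial σ k) ^ e i) =
      (fun s => monomial s 1) ∘ fun i => Finsupp.single i (e i) := by
    ext1 i; simp [X_pow_eq_monomial]
  rw [hgens, Set.range_comp, mem_ideal_span_monomial_image]
  intro hmem
  have hd : d ∈ ((∑ i, l i • X i) ^ (∑ i, (e i - 1)) : MvPolynomial σ k).support := by
    rw [mem_support_iff, coeff_linearCombination_X_pow_of_fintype,
      if_pos (by simp [d, Finsupp.sum_fintype])]
    refine mul_ne_zero (Nat.cast_ne_zero.mpr (Nat.multinomial_pos _ _).ne') ?_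
    exact Finsupp.prod_ne_zero_iff.mpr fun i _ => pow_ne_zero _ (hl i)
  obtain ⟨_, ⟨i, rfl⟩, hi⟩ := hmem d hd
  have hle : e i ≤ e i - 1 := Finsupp.single_le_iff.mp hi
  have := he i
  omega

theorem linear_pow_notMem_pointIdeal [CharZero k] {e : σ → ℕ} (he : ∀ i, e i ≠ 0)
    {l : σ → k} (hl : ∀ i, l i ≠ 0) (b : σ → k) :
    (∑ i, l i • (X i - C (b i))) ^ (∑ i, (e i - 1)) ∉ pointIdeal b e := by
  intro hmem
  -- translating `b` to the origin turns `pointIdeal b e` into a monomial ideal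
  set φ : MvPolynomial σ k →ₐ[k] MvPolynomial σ k := aeval fun i => X i + C (b i)
  have hφ : ∀ i, φ (X i - C (b i)) = X i := fun i => by simp [φ, algebraMap_eq]
  have h := Ideal.mem_map_of_mem φ hmem
  rw [pointIdeal, Ideal.map_span, ← Set.range_comp] at h
  simp only [Function.comp_def, map_pow, map_sum, map_smul, hφ] at h
  exact linear_pow_notMem_span_X_pow he hl h

variable [DecidableEq σ] (A : σ → Finset k) (ν : σ → k → ℕ)

noncomputable def idealOfRoots : Ideal (MvPolynomial σ k) :=
  Ideal.span (Set.range fun i => ∏ c ∈ A i, (X i - C c) ^ ν i c)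

theorem idealOfRoots_le_pointIdeal {b : σ → k} (hb : b ∈ Fintype.piFinset A) :
    idealOfRoots A ν ≤ pointIdeal b fun i => ν i (b i) := by
  refine Ideal.span_le.mpr ?_
  rintro _ ⟨i, rfl⟩
  exact Ideal.mem_of_dvd _ (dvd_prod_of_mem _ (Fintype.mem_piFinset.mp hb i))
    (Ideal.subset_span ⟨i, rfl⟩)

theorem prod_pointIdeal_le_idealOfRoots :
    ∏ a ∈ Fintype.piFinset A, pointIdeal a (fun i => ν i (a i)) ≤ idealOfRoots A ν := by
  simp only [pointIdeal]
  rw [Ideal.prod_span, Ideal.span_le]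
  intro x hx
  obtain ⟨g, hg, rfl⟩ := (Set.mem_finsetProd _ _ _).mp hx
  obtain ⟨i, hi⟩ := exists_prod_dvd_prod_piFinset A (fun i c => (X i - C c) ^ ν i c) g
    fun a ha => (hg ha).imp fun i hi => hi.symm
  exact Ideal.mem_of_dvd _ hi (Ideal.subset_span ⟨i, rfl⟩)

theorem exists_monic_aeval_eq_zero (δ : MvPolynomial σ k ⧸ idealOfRoots A ν) :
    ∃ q : Polynomial k, q.Monic ∧
      q.natDegree = ∑ a ∈ Fintype.piFinset A, (∑ i, (ν i (a i) - 1) + 1) ∧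
      Polynomial.aeval δ q = 0 := by
  obtain ⟨p, rfl⟩ := Ideal.Quotient.mk_surjective δ
  have hmonic : ∀ a ∈ Fintype.piFinset A,
      ((Polynomial.X - Polynomial.C (eval a p)) ^ (∑ i, (ν i (a i) - 1) + 1)).Monic :=
    fun a _ => (Polynomial.monic_X_sub_C _).pow _
  refine ⟨_, Polynomial.monic_prod_of_monic _ _ hmonic, ?_, ?_⟩
  · simp [Polynomial.natDegree_prod_of_monic _ _ hmonic]
  rw [Ideal.Quotient.aeval_mk_eq_zero_iff]
  refine prod_pointIdeal_le_idealOfRoots A ν ?_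
  simp only [map_prod, map_pow, map_sub, Polynomial.aeval_X, Polynomial.aeval_C, algebraMap_eq]
  exact Ideal.prod_mem_prod fun a _ => sub_C_eval_pow_mem_pointIdeal a _ p

theorem isIntegral_of_idealOfRoots (δ : MvPolynomial σ k ⧸ idealOfRoots A ν) : IsIntegral k δ :=
  let ⟨q, hq, _, hδ⟩ := exists_monic_aeval_eq_zero A ν δ
  ⟨q, hq, hδ⟩

theorem natDegree_minpoly_le (δ : MvPolynomial σ k ⧸ idealOfRoots A ν) :
    (minpoly k δ).natDegree ≤ ∑ a ∈ Fintype.piFinset A, (∑ i, (ν i (a i) - 1) + 1) := by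
  obtain ⟨q, hq, hdeg, hδ⟩ := exists_monic_aeval_eq_zero A ν δ
  exact hdeg ▸ Polynomial.natDegree_le_of_dvd (minpoly.dvd k δ hδ) hq.ne_zero

theorem le_rootMultiplicity_minpoly [CharZero k] (hν : ∀ i, ∀ c ∈ A i, 1 ≤ ν i c)
    {l : σ → k} (hl : ∀ i, l i ≠ 0) {b : σ → k} (hb : b ∈ Fintype.piFinset A) :
    ∑ i, (ν i (b i) - 1) + 1 ≤ (minpoly k (Ideal.Quotient.mk (idealOfRoots A ν)
      (∑ i, l i • X i))).rootMultiplicity (∑ i, l i * b i) := by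
  set p : MvPolynomial σ k := ∑ i, l i • X i
  set Q := pointIdeal b fun i => ν i (b i)
  set y := Ideal.Quotient.mk Q p
  have hpb : eval b p = ∑ i, l i * b i := by simp [p]
  have hy : y - algebraMap k _ (eval b p) = Ideal.Quotient.mk Q (p - C (eval b p)) := rfl
  have hroot : Polynomial.aeval y (minpoly k (Ideal.Quotient.mk (idealOfRoots A ν) p)) = 0 := by
    have h := minpoly.aeval k (Ideal.Quotient.mk (idealOfRoots A ν) p)
    rw [Ideal.Quotient.aeval_mk_eq_zero_iff] at h ⊢
    exact idealOfRoots_le_pointIdeal A ν hb h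
  have hnil : (y - algebraMap k _ (eval b p)) ^ (∑ i, (ν i (b i) - 1) + 1) = 0 := by
    rw [hy, ← map_pow, Ideal.Quotient.eq_zero_iff_mem]
    exact sub_C_eval_pow_mem_pointIdeal b _ p
  have hne : (y - algebraMap k _ (eval b p)) ^ (∑ i, (ν i (b i) - 1)) ≠ 0 := by
    have hlin : p - C (eval b p) = ∑ i, l i • (X i - C (b i)) := by
      simp [p, smul_sub, sum_sub_distrib, smul_eq_C_mul, map_sum]
    have hν0 : ∀ i, ν i (b i) ≠ 0 :=
      fun i => Nat.one_le_iff_ne_zero.mp (hν i _ (Fintype.mem_piFinset.mp hb i))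
    rw [hy, ← map_pow, Ne, Ideal.Quotient.eq_zero_iff_mem, hlin]
    exact linear_pow_notMem_pointIdeal hν0 hl b
  rw [← hpb]
  by_contra! hlt
  exact hne (pow_eq_zero_of_le (by omega) (Polynomial.pow_rootMultiplicity_eq_zero
    (minpoly.ne_zero (isIntegral_of_idealOfRoots A ν _)) hroot ⟨_, hnil⟩))

theorem exists_le_natDegree_minpoly [CharZero k] (hν : ∀ i, ∀ c ∈ A i, 1 ≤ ν i c) :
    ∃ δ : MvPolynomial σ k ⧸ idealOfRoots A ν,
      ∑ a ∈ Fintype.piFinset A, (∑ i, (ν i (a i) - 1) + 1) ≤ (minpoly k δ).natDegree := by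
  classical
  obtain ⟨l, hl, hinj⟩ := exists_forall_ne_zero_injOn_linear (k := k) (Fintype.piFinset A)
  set δ := Ideal.Quotient.mk (idealOfRoots A ν) (∑ i, l i • X i)
  refine ⟨δ, ?_⟩
  calc ∑ a ∈ Fintype.piFinset A, (∑ i, (ν i (a i) - 1) + 1)
      ≤ ∑ b ∈ Fintype.piFinset A, (minpoly k δ).rootMultiplicity (∑ i, l i * b i) :=
        sum_le_sum fun b hb => le_rootMultiplicity_minpoly A ν hν hl hb
    _ = ∑ c ∈ (Fintype.piFinset A).image fun b => ∑ i, l i * b i,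
          (minpoly k δ).rootMultiplicity c := by rw [sum_image hinj]
    _ ≤ (minpoly k δ).natDegree := Polynomial.sum_rootMultiplicity_le_natDegree _ _

end MvPolynomial

theorem stmt_8_general (k : Type*) [Field k] [CharZero k] (n : ℕ)
    (A : Fin n → Finset k)
    (ν : Fin n → k → ℕ) (hν : ∀ i, ∀ a ∈ A i, 1 ≤ ν i a)
    (I : Ideal (MvPolynomial (Fin n) k))
    (hI : I = Ideal.span (Set.range fun i =>
      ∏ a ∈ A i, (MvPolynomial.X i - MvPolynomial.C a) ^ ν i a)) :
    sSup (Set.range fun δ : MvPolynomial (Fin n) k ⧸ I => (minpoly k δ).natDegree)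
      = ∑ a ∈ Fintype.piFinset A, ((∑ i, ν i (a i)) - n + 1) := by
  subst hI
  have hexp : ∀ a ∈ Fintype.piFinset A, ∑ i, ν i (a i) - n + 1 = ∑ i, (ν i (a i) - 1) + 1 := by
    intro a ha
    rw [sum_tsub_distrib _ fun i _ => hν i _ (Fintype.mem_piFinset.mp ha i)]
    simp
  rw [sum_congr rfl hexp]
  obtain ⟨δ, hδ⟩ := exists_le_natDegree_minpoly A ν hν
  refine IsGreatest.csSup_eq ⟨⟨δ, le_antisymm (natDegree_minpoly_le A ν δ) hδ⟩, ?_⟩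
  rintro _ ⟨δ', rfl⟩
  exact natDegree_minpoly_le A ν δ'

theorem stmt_8 (k : Type*) [Field k] [CharZero k] [IsAlgClosed k] (n : ℕ)
    (A : Fin n → Finset k) (hA : ∀ i, (A i).Nonempty)
    (ν : Fin n → k → ℕ) (hν : ∀ i, ∀ a ∈ A i, 1 ≤ ν i a)
    (I : Ideal (MvPolynomial (Fin n) k))
    (hI : I = Ideal.span (Set.range fun i =>
      ∏ a ∈ A i, (MvPolynomial.X i - MvPolynomial.C a) ^ ν i a)) :
    sSup (Set.range fun δ : MvPolynomial (Fin n) k ⧸ I => (minpoly k δ).natDegree)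
      = ∑ a ∈ Fintype.piFinset A, ((∑ i, ν i (a i)) - n + 1) :=
  stmt_8_general k n A ν hν I hI
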